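/- arXiv:2306.05557 — 4 statements merged into one kernel-verified Lean document; each statement's English description precedes it below -/
import Mathlib

section
/- Let d > 0, h ∈ [0,1], p ∈ (0, 0.5] with p - d²p + 2dhp + 2d²hp ≠ 0 and 1 + d(2h-1) ≠ 0. For a test node t with local homophily ratio h_t ∈ [0,1], degree d, class 0 and features (0.5+p, 0.5-p), let r_t = (1/2)·(1+d+p+dp(2h_t-1), 1-p+d(1+p-2h_t p)) and let W be the optimal weight matrix from the training setup. Then z_t := r_t·W = (1/(1+d(2h-1)))·(1+d(h+h_t-1), d(h-h_t)). -/
/-!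
Write `u = 1 + d`, `v = p (1 + d (2h - 1))` and `w = p (1 + d (2h_t - 1))`. Then
`W = (1 / (2uv)) [[u + v, v - u], [v - u, u + v]]`, which has eigenvector `(1, 1)` with eigenvalue
`1 / u` and eigenvector `(1, -1)` with eigenvalue `1 / v`, while `r_t = ½ (u (1, 1) + w (1, -1))`.
Hence `r_t W = ½ ((1, 1) + (w / v) (1, -1))`: the degree and the feature strength `p` cancel and
only the ratio of the homophily terms `1 + d (2h - 1)` and `1 + d (2h_t - 1)` survives.
-/

def vecMulSymm {K : Type*} [Mul K] [Add K] (r : K × K) (α β : K) : K × K :=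
  (r.1 * α + r.2 * β, r.1 * β + r.2 * α)

theorem vecMulSymm_eigenbasis {K : Type*} [Field K] [CharZero K] {u v : K} (hu : u ≠ 0)
    (hv : v ≠ 0) (w : K) :
    vecMulSymm ((1 / 2) * (u + w), (1 / 2) * (u - w))
        (1 / (2 * (u * v)) * (u + v)) (1 / (2 * (u * v)) * (v - u)) =
      ((v + w) / (2 * v), (v - w) / (2 * v)) := by
  unfold vecMulSymm
  ext <;> (field_simp; ring)

theorem stmt1_general (d h p ht : ℝ)
    (h2 : p - d ^ 2 * p + 2 * d * h * p + 2 * d ^ 2 * h * p ≠ 0) :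
    let c : ℝ := 1 / (2 * (p - d ^ 2 * p + 2 * d * h * p + 2 * d ^ 2 * h * p))
    let a : ℝ := 1 + d + p + d * p * (2 * h - 1)
    let b : ℝ := -1 + p - d * (1 + p - 2 * h * p)
    let rt : ℝ × ℝ := ((1/2) * (1 + d + p + d * p * (2 * ht - 1)),
                       (1/2) * (1 - p + d * (1 + p - 2 * ht * p)))
    let zt : ℝ × ℝ := (rt.1 * (c * a) + rt.2 * (c * b), rt.1 * (c * b) + rt.2 * (c * a))
    zt = ((1 / (1 + d * (2 * h - 1))) * (1 + d * (h + ht - 1)),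
          (1 / (1 + d * (2 * h - 1))) * (d * (h - ht))) := by
  intro c a b rt zt
  set u := 1 + d
  set v := p * (1 + d * (2 * h - 1))
  set w := p * (1 + d * (2 * ht - 1))
  have hfactor : p - d ^ 2 * p + 2 * d * h * p + 2 * d ^ 2 * h * p = u * v := by ring
  obtain ⟨hu, hv⟩ := mul_ne_zero_iff.mp (hfactor ▸ h2)
  obtain ⟨hp, hD⟩ := mul_ne_zero_iff.mp hv
  have hrt : rt = ((1 / 2) * (u + w), (1 / 2) * (u - w)) := by ext <;> (simp only [rt]; ring)
  have hca : c * a = 1 / (2 * (u * v)) * (u + v) := by simp only [c, a, hfactor]; ring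
  have hcb : c * b = 1 / (2 * (u * v)) * (v - u) := by simp only [c, b, hfactor]; ring
  change vecMulSymm rt (c * a) (c * b) = _
  rw [hrt, hca, hcb, vecMulSymm_eigenbasis hu hv]
  ext <;> (field_simp; ring)

/-- For a class-0 test node with local homophily `ht`, the logit vector
`z_t = r_t · W` has the closed form `(1/(1+d(2h-1)))·(1+d(h+ht-1), d(h-ht))`. -/
theorem stmt1 (d h p ht : ℝ) (hd : 0 < d) (hh : h ∈ Set.Icc (0:ℝ) 1)
    (hp : p ∈ Set.Ioc (0:ℝ) 0.5) (hht : ht ∈ Set.Icc (0:ℝ) 1)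
    (h2 : p - d ^ 2 * p + 2 * d * h * p + 2 * d ^ 2 * h * p ≠ 0)
    (h1 : 1 + d * (2 * h - 1) ≠ 0) :
    let c : ℝ := 1 / (2 * (p - d ^ 2 * p + 2 * d * h * p + 2 * d ^ 2 * h * p))
    let a : ℝ := 1 + d + p + d * p * (2 * h - 1)
    let b : ℝ := -1 + p - d * (1 + p - 2 * h * p)
    let rt : ℝ × ℝ := ((1/2) * (1 + d + p + d * p * (2 * ht - 1)),
                       (1/2) * (1 - p + d * (1 + p - 2 * ht * p)))
    let zt : ℝ × ℝ := (rt.1 * (c * a) + rt.2 * (c * b), rt.1 * (c * b) + rt.2 * (c * a))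
    zt = ((1 / (1 + d * (2 * h - 1))) * (1 + d * (h + ht - 1)),
          (1 / (1 + d * (2 * h - 1))) * (d * (h - ht))) :=
  stmt1_general d h p ht h2
end

section
/- (Theorem 1) Under the one-layer homophilous GNN model, for a test node t of class 0 with local homophily ratio h_t = h + α_t, the output logit vector satisfies z_t = (1,0) + b₁·(α_t, -α_t) where b₁ = d/(1 + d(2h-1)), i.e., z_t - z(α_t = 0) = b₁·(α_t, -α_t). -/
/-!
The trained weight matrix is `W = c • !![a, b; b, a]`, and the aggregated representation of a
class-0 node is affine in its homophily ratio with slope `d p (1, -1)`. Since `(1, -1)` is an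
eigenvector of `W` with eigenvalue `c (a - b) = 1 / (p (1 + d (2h - 1)))`, moving the homophily
ratio by `α` moves the logits by `b₁ α (1, -1)`, starting from the training target `z h = (1, 0)`.
-/

namespace HomophilousGNN

noncomputable def aggregate (d p x : ℝ) : ℝ × ℝ :=
  ((1/2) * (1 + d + p + d * p * (2 * x - 1)), (1/2) * (1 - p + d * (1 + p - 2 * x * p)))

def logits (c a b : ℝ) (u : ℝ × ℝ) : ℝ × ℝ :=
  (u.1 * (c * a) + u.2 * (c * b), u.1 * (c * b) + u.2 * (c * a))

lemma aggregate_add (d p x s : ℝ) :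
    aggregate d p (x + s) = aggregate d p x + (d * p * s) • ((1 : ℝ), (-1 : ℝ)) := by
  ext <;> simp only [aggregate, Prod.fst_add, Prod.snd_add, Prod.smul_mk, smul_eq_mul] <;> ring

lemma logits_add_smul (c a b s : ℝ) (u : ℝ × ℝ) :
    logits c a b (u + s • ((1 : ℝ), (-1 : ℝ))) =
      logits c a b u + (s * (c * (a - b))) • ((1 : ℝ), (-1 : ℝ)) := by
  ext <;> simp only [logits, Prod.fst_add, Prod.snd_add, Prod.smul_mk, smul_eq_mul] <;> ring

lemma trained_denominator_eq (d h p : ℝ) :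
    p - d ^ 2 * p + 2 * d * h * p + 2 * d ^ 2 * h * p = p * (1 + d) * (1 + d * (2 * h - 1)) := by
  ring

variable {d h p : ℝ} (hdeg : p * (1 - d ^ 2 + 2 * d * h + 2 * d ^ 2 * h) ≠ 0)
include hdeg

lemma trained_factors_ne_zero : p ≠ 0 ∧ 1 + d ≠ 0 ∧ 1 + d * (2 * h - 1) ≠ 0 := by
  rw [show p * (1 - d ^ 2 + 2 * d * h + 2 * d ^ 2 * h) = p * (1 + d) * (1 + d * (2 * h - 1))
    by ring] at hdeg
  simp_all

lemma logits_aggregate_self :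
    logits (1 / (2 * (p - d ^ 2 * p + 2 * d * h * p + 2 * d ^ 2 * h * p)))
      (1 + d + p + d * p * (2 * h - 1)) (-1 + p - d * (1 + p - 2 * h * p))
      (aggregate d p h) = (1, 0) := by
  obtain ⟨hp, hd, hh⟩ := trained_factors_ne_zero hdeg
  rw [trained_denominator_eq]
  ext <;> simp only [logits, aggregate] <;> field_simp <;> ring

lemma homophily_slope_eq :
    d * p * (1 / (2 * (p - d ^ 2 * p + 2 * d * h * p + 2 * d ^ 2 * h * p)) *
      ((1 + d + p + d * p * (2 * h - 1)) - (-1 + p - d * (1 + p - 2 * h * p)))) =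
      d / (1 + d * (2 * h - 1)) := by
  obtain ⟨hp, hd, hh⟩ := trained_factors_ne_zero hdeg
  rw [trained_denominator_eq]
  field_simp
  ring

end HomophilousGNN

open HomophilousGNN in
theorem stmt2_general (d h p αt : ℝ)
    (h2 : p * (1 - d ^ 2 + 2 * d * h + 2 * d ^ 2 * h) ≠ 0) :
    let c : ℝ := 1 / (2 * (p - d ^ 2 * p + 2 * d * h * p + 2 * d ^ 2 * h * p))
    let a : ℝ := 1 + d + p + d * p * (2 * h - 1)
    let b : ℝ := -1 + p - d * (1 + p - 2 * h * p)
    let r : ℝ → ℝ × ℝ := fun x => ((1/2) * (1 + d + p + d * p * (2 * x - 1)),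
                                   (1/2) * (1 - p + d * (1 + p - 2 * x * p)))
    let z : ℝ → ℝ × ℝ := fun x =>
      ((r x).1 * (c * a) + (r x).2 * (c * b), (r x).1 * (c * b) + (r x).2 * (c * a))
    let b₁ : ℝ := d / (1 + d * (2 * h - 1))
    z (h + αt) = (1 + b₁ * αt, -(b₁ * αt)) ∧
    z (h + αt) - z h = (b₁ * αt, -(b₁ * αt)) := by
  intro c a b r z b₁
  have hz : ∀ x, z x = logits c a b (aggregate d p x) := fun _ => rfl
  have hz₀ : z h = (1, 0) := logits_aggregate_self h2
  have hshift : z (h + αt) = z h + (b₁ * αt) • ((1 : ℝ), (-1 : ℝ)) := by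
    have hslope : d * p * (c * (a - b)) = b₁ := homophily_slope_eq h2
    rw [hz, hz, aggregate_add, logits_add_smul, ← hslope]
    ring_nf
  rw [hshift, hz₀]
  refine ⟨?_, ?_⟩ <;> ext <;> simp

/-- Theorem 1: under the one-layer homophilous GNN, the class-0 test node's
logits satisfy `z(h+α) = (1 + b₁α, -b₁α)` and `z(h+α) - z(h) = b₁·(α, -α)`
with `b₁ = d/(1+d(2h-1))`. -/
theorem stmt2 (d h p αt : ℝ) (hd : 0 < d) (hh : h ∈ Set.Icc (0:ℝ) 1)
    (hp : p ∈ Set.Ioc (0:ℝ) 0.5) (hα : αt ∈ Set.Icc (-h) (1 - h))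
    (h1 : 1 + d * (2 * h - 1) ≠ 0)
    (h2 : p * (1 - d ^ 2 + 2 * d * h + 2 * d ^ 2 * h) ≠ 0) :
    let c : ℝ := 1 / (2 * (p - d ^ 2 * p + 2 * d * h * p + 2 * d ^ 2 * h * p))
    let a : ℝ := 1 + d + p + d * p * (2 * h - 1)
    let b : ℝ := -1 + p - d * (1 + p - 2 * h * p)
    let r : ℝ → ℝ × ℝ := fun x => ((1/2) * (1 + d + p + d * p * (2 * x - 1)),
                                   (1/2) * (1 - p + d * (1 + p - 2 * x * p)))
    let z : ℝ → ℝ × ℝ := fun x =>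
      ((r x).1 * (c * a) + (r x).2 * (c * b), (r x).1 * (c * b) + (r x).2 * (c * a))
    let b₁ : ℝ := d / (1 + d * (2 * h - 1))
    z (h + αt) = (1 + b₁ * αt, -(b₁ * αt)) ∧
    z (h + αt) - z h = (b₁ * αt, -(b₁ * αt)) :=
  stmt2_general d h p αt h2
end

section
/- (Theorem 2) Under the heterophilous GNN model F' = (X ∥ AX)W with the pseudo-inverse optimal weight matrix, the logit vector for a class-0 test node with local homophily ratio h_t is z_t = (1/(1+d²(2h-1)²))·(1 + d²(2h-1)(h+h_t-1), d²(2h-1)(h-h_t)). Consequently, writing h_t = h + α_t, z_t = (1,0) + b₁'·(α_t, -α_t) where b₁' = d²(2h-1)/(1 + d²(2h-1)²). -/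
/-!
The minimum-norm weight `W = Rᵀ (R Rᵀ)⁻¹` is a right inverse of `R`, so every training row is
mapped exactly to its one-hot label, and the readout `z = rt W` is affine in the test row `rt`.
The class-0 row with homophily `h_t` is the class-0 training row plus
`(h_t - h) · d p (0, 0, 1, -1)`. That direction is mapped by `R` to a multiple of `(1, -1)`,
and `(1, -1)` is an eigenvector of the Gram matrix `R Rᵀ` (its two rows are coordinate swaps of
each other) with eigenvalue `p² (1 + d² (2h - 1)²)`.
Hence `z_t = (1, 0) + (h_t - h) b₁' (1, -1)`.
-/

namespace Matrix

variable {m n K : Type*} [Fintype m] [Fintype n] [DecidableEq m]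

section CommRing

variable [CommRing K] (R : Matrix m n K)

theorem vecMul_transpose_mul_inv_gram (v : n → K) :
    v ᵥ* (Rᵀ * (R * Rᵀ)⁻¹) = (R * Rᵀ)⁻¹ *ᵥ (R *ᵥ v) := by
  rw [← vecMul_vecMul, vecMul_transpose, ← mulVec_transpose, transpose_nonsing_inv,
    transpose_mul, transpose_transpose]

theorem vecMul_vecMul_transpose_mul_inv_gram (hR : IsUnit (R * Rᵀ).det) (c : m → K) :
    (c ᵥ* R) ᵥ* (Rᵀ * (R * Rᵀ)⁻¹) = c := by
  rw [vecMul_transpose_mul_inv_gram, ← mulVec_transpose, mulVec_mulVec c R, mulVec_mulVec,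
    nonsing_inv_mul _ hR, one_mulVec]

end CommRing

section Field

variable [Field K] {G : Matrix m m K} {u : m → K} {μ : K}

theorem ne_zero_of_mulVec_eq_smul_of_isUnit_det (hG : IsUnit G.det) (hu : G *ᵥ u = μ • u)
    (hu0 : u ≠ 0) : μ ≠ 0 := by
  rintro rfl
  apply hu0
  rw [← one_mulVec u, ← nonsing_inv_mul _ hG, ← mulVec_mulVec, hu, zero_smul, mulVec_zero]

theorem inv_mulVec_eq_inv_smul (hG : IsUnit G.det) (hu : G *ᵥ u = μ • u) (hu0 : u ≠ 0) :
    G⁻¹ *ᵥ u = μ⁻¹ • u := by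
  have hμ := ne_zero_of_mulVec_eq_smul_of_isUnit_det hG hu hu0
  calc G⁻¹ *ᵥ u = μ⁻¹ • (G⁻¹ *ᵥ (G *ᵥ u)) := by
        rw [hu, mulVec_smul, smul_smul, inv_mul_cancel₀ hμ, one_smul]
    _ = μ⁻¹ • u := by rw [mulVec_mulVec, nonsing_inv_mul _ hG, one_mulVec]

end Field

end Matrix

open Matrix

noncomputable def featureMatrix (d h p : ℝ) : Matrix (Fin 2) (Fin 4) ℝ :=
  (1/2 : ℝ) • Matrix.of
    ![![1 + p, 1 - p, d + d * p * (2 * h - 1), d * (1 + p - 2 * h * p)],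
      ![1 - p, 1 + p, d * (1 + p - 2 * h * p), d + d * p * (2 * h - 1)]]

namespace featureMatrix

variable (d h p : ℝ)

theorem row_zero_eq_add_smul (ht : ℝ) :
    (featureMatrix d ht p).row 0 =
      (featureMatrix d h p).row 0 + (ht - h) • ![0, 0, d * p, -(d * p)] := by
  ext i
  fin_cases i <;>
    simp only [featureMatrix, Fin.zero_eta, Fin.mk_one, Fin.reduceFinMk, Fin.isValue, row_apply,
      of_apply, cons_val', cons_val, cons_val_zero, cons_val_one, cons_val_fin_one, smul_eq_mul,
      Pi.add_apply, smul_of, smul_cons, smul_empty] <;>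
    ring

theorem mulVec_homophily_direction :
    featureMatrix d h p *ᵥ ![0, 0, d * p, -(d * p)] =
      (d ^ 2 * p ^ 2 * (2 * h - 1)) • ![1, -1] := by
  ext i
  fin_cases i <;>
    simp only [featureMatrix, Fin.zero_eta, Fin.mk_one, Fin.isValue, Matrix.smul_apply, of_apply,
      cons_val', cons_val, cons_val_zero, cons_val_one, cons_val_fin_one, smul_eq_mul, mulVec,
      dotProduct, Fin.sum_univ_four, Pi.smul_apply] <;>
    ring

theorem gram_mulVec_one_neg_one :
    (featureMatrix d h p * (featureMatrix d h p)ᵀ) *ᵥ ![1, -1] =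
      (p ^ 2 * (1 + d ^ 2 * (2 * h - 1) ^ 2)) • ![1, -1] := by
  ext i
  fin_cases i <;>
    simp only [featureMatrix, Fin.zero_eta, Fin.mk_one, Fin.isValue, Matrix.smul_apply, of_apply,
      cons_val', cons_val, cons_val_zero, cons_val_one, cons_val_fin_one, smul_eq_mul, mulVec,
      dotProduct, Matrix.mul_apply, transpose_apply, Fin.sum_univ_four, Fin.sum_univ_two,
      Pi.smul_apply] <;>
    ring

end featureMatrix

theorem stmt9_general (d h p ht : ℝ)
    (R : Matrix (Fin 2) (Fin 4) ℝ)
    (hR : R = (1/2 : ℝ) • Matrix.of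
      ![![1 + p, 1 - p, d + d * p * (2 * h - 1), d * (1 + p - 2 * h * p)],
        ![1 - p, 1 + p, d * (1 + p - 2 * h * p), d + d * p * (2 * h - 1)]])
    (hdet : IsUnit (R * R.transpose).det) :
    let W : Matrix (Fin 4) (Fin 2) ℝ := R.transpose * (R * R.transpose)⁻¹
    let rt : Fin 4 → ℝ := (1/2 : ℝ) •
      ![1 + p, 1 - p, d + d * p * (2 * ht - 1), d * (1 + p - 2 * ht * p)]
    let z : Fin 2 → ℝ := Matrix.vecMul rt W
    let b₁' : ℝ := d ^ 2 * (2 * h - 1) / (1 + d ^ 2 * (2 * h - 1) ^ 2)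
    z 0 = (1 / (1 + d ^ 2 * (2 * h - 1) ^ 2)) * (1 + d ^ 2 * (2 * h - 1) * (h + ht - 1)) ∧
    z 1 = (1 / (1 + d ^ 2 * (2 * h - 1) ^ 2)) * (d ^ 2 * (2 * h - 1) * (h - ht)) ∧
    z 0 = 1 + b₁' * (ht - h) ∧ z 1 = -(b₁' * (ht - h)) := by
  intro W rt z b₁'
  change R = featureMatrix d h p at hR
  subst hR
  have hu : (![1, -1] : Fin 2 → ℝ) ≠ 0 := fun hu0 => by simpa using congrFun hu0 0
  have hgram := featureMatrix.gram_mulVec_one_neg_one d h p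
  have hp : p ≠ 0 := by
    rintro rfl
    simpa using ne_zero_of_mulVec_eq_smul_of_isUnit_det hdet hgram hu
  have hcoef :
      d ^ 2 * p ^ 2 * (2 * h - 1) * (p ^ 2 * (1 + d ^ 2 * (2 * h - 1) ^ 2))⁻¹ = b₁' := by
    simp only [b₁']
    field_simp
  have hz : z = Pi.single 0 1 + ((ht - h) * b₁') • ![1, -1] := by
    change (featureMatrix d ht p).row 0 ᵥ* W = _
    rw [featureMatrix.row_zero_eq_add_smul d h p ht, ← single_one_vecMul, add_vecMul,
      smul_vecMul, vecMul_vecMul_transpose_mul_inv_gram _ hdet, vecMul_transpose_mul_inv_gram,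
      featureMatrix.mulVec_homophily_direction, mulVec_smul, inv_mulVec_eq_inv_smul hdet hgram hu,
      smul_smul, smul_smul, mul_assoc, hcoef]
  have hz0 : z 0 = 1 + b₁' * (ht - h) := by simp [hz, vecHead, vecTail, mul_comm]
  have hz1 : z 1 = -(b₁' * (ht - h)) := by simp [hz, vecHead, vecTail, mul_comm]
  refine ⟨?_, ?_, hz0, hz1⟩
  · rw [hz0]; simp only [b₁']; field_simp; ring
  · rw [hz1]; simp only [b₁']; field_simp; ring

/-- Theorem 2: the heterophilous GNN `F' = (X ∥ AX)W`, with `W` the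
minimum-norm (right pseudo-inverse) solution of the reduced training system,
outputs for a class-0 test node with local homophily `ht` the logits
`z_t = (1/(1+d²(2h-1)²))·(1 + d²(2h-1)(h+ht-1), d²(2h-1)(h-ht))`;
equivalently `z_t = (1,0) + b₁'·(ht-h, -(ht-h))` with
`b₁' = d²(2h-1)/(1+d²(2h-1)²)`. -/
theorem stmt9 (d h p ht : ℝ) (hd : 0 < d) (hh : h ∈ Set.Icc (0:ℝ) 1)
    (hp : p ∈ Set.Ioc (0:ℝ) 0.5) (hht : ht ∈ Set.Icc (0:ℝ) 1)
    (R : Matrix (Fin 2) (Fin 4) ℝ)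
    (hR : R = (1/2 : ℝ) • Matrix.of
      ![![1 + p, 1 - p, d + d * p * (2 * h - 1), d * (1 + p - 2 * h * p)],
        ![1 - p, 1 + p, d * (1 + p - 2 * h * p), d + d * p * (2 * h - 1)]])
    (hdet : IsUnit (R * R.transpose).det) :
    let W : Matrix (Fin 4) (Fin 2) ℝ := R.transpose * (R * R.transpose)⁻¹
    let rt : Fin 4 → ℝ := (1/2 : ℝ) •
      ![1 + p, 1 - p, d + d * p * (2 * ht - 1), d * (1 + p - 2 * ht * p)]
    let z : Fin 2 → ℝ := Matrix.vecMul rt W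
    let b₁' : ℝ := d ^ 2 * (2 * h - 1) / (1 + d ^ 2 * (2 * h - 1) ^ 2)
    z 0 = (1 / (1 + d ^ 2 * (2 * h - 1) ^ 2)) * (1 + d ^ 2 * (2 * h - 1) * (h + ht - 1)) ∧
    z 1 = (1 / (1 + d ^ 2 * (2 * h - 1) ^ 2)) * (d ^ 2 * (2 * h - 1) * (h - ht)) ∧
    z 0 = 1 + b₁' * (ht - h) ∧ z 1 = -(b₁' * (ht - h)) :=
  stmt9_general d h p ht R hR hdet
end

section
/- In the one-layer homophilous GNN model with 0 ≤ h < 0.5, the condition b₁ < 0 (which causes performance to degrade as the test node's local homophily increases) holds if and only if the degree satisfies d > 1/(1 - 2h). In contrast, for 0.5 < h ≤ 1, b₁ > 0 holds for every degree d > 0. Hence the heterophilous and homophilous regimes are asymmetric: degradation under increased homophily requires a degree threshold, while degradation under decreased homophily does not. -/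
/-! The numerator `d` of `b₁` is positive, so `b₁` has the sign of its denominator
`1 + d(2h - 1)`. For `h > 1/2` the denominator is a sum of positive terms; for `h < 1/2`
it is negative exactly when `d (1 - 2h) > 1`. -/

lemma div_neg_iff_of_pos_left {α : Type*} [Field α] [LinearOrder α] [IsStrictOrderedRing α]
    {a b : α} (ha : 0 < a) : a / b < 0 ↔ b < 0 := by
  simp [div_neg_iff, ha, ha.not_gt]

lemma one_add_mul_two_mul_sub_one_neg_iff {d h : ℝ} (hh : 2 * h < 1) :
    1 + d * (2 * h - 1) < 0 ↔ 1 / (1 - 2 * h) < d := by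
  rw [div_lt_iff₀ (by linarith)]
  constructor <;> intro <;> linarith

/-- Asymmetry of the two regimes: for `0 ≤ h < 0.5`, `b₁ < 0` iff the degree
exceeds the threshold `1/(1-2h)`; for `0.5 < h ≤ 1`, `b₁ > 0` for every
degree `d > 0`. -/
theorem stmt18 (d h : ℝ) (hd : 0 < d) :
    (0 ≤ h → h < 0.5 →
      (d / (1 + d * (2 * h - 1)) < 0 ↔ d > 1 / (1 - 2 * h))) ∧
    (0.5 < h → h ≤ 1 → d / (1 + d * (2 * h - 1)) > 0) := by
  constructor
  · intro _ hh
    rw [div_neg_iff_of_pos_left hd, gt_iff_lt]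
    exact one_add_mul_two_mul_sub_one_neg_iff (by norm_num at hh; linarith)
  · intro hh _
    have hden : 0 < 1 + d * (2 * h - 1) := by
      have : 0 < 2 * h - 1 := by norm_num at hh; linarith
      positivity
    exact div_pos hd hden
end
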